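/- Let d ≥ 2 and let p : Fin d → ℝ be a probability vector (p_i ≥ 0 and ∑_i p_i = 1). Set χ = ∑_i |p_i − 1/d| and assume χ ≤ 1/d. Then every p_i is strictly positive and for every index i: |log₂(p_i · d)| ≤ −log₂(1 − d·χ/2) ≤ d·χ. -/

import Mathlib

open scoped Kronecker ComplexOrder
open Matrix MeasureTheory

noncomputable section

/-- The trace norm `‖A‖₁ = Tr √(AᴴA)`. -/
def traceNorm {n : Type*} [Fintype n] [DecidableEq n] (A : Matrix n n ℂ) : ℝ :=
  (((Matrix.posSemidef_conjTranspose_mul_self A).1.eigenvectorUnitary.1 : Matrix n n ℂ) *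
      Matrix.diagonal (((↑) : ℝ → ℂ) ∘ (√·) ∘ (Matrix.posSemidef_conjTranspose_mul_self A).1.eigenvalues) *
      (star (Matrix.posSemidef_conjTranspose_mul_self A).1.eigenvectorUnitary : Matrix n n ℂ)).trace.re

/-- The operator (spectral) norm `‖A‖_∞`. -/
def opNorm {n : Type*} [Fintype n] [DecidableEq n] (A : Matrix n n ℂ) : ℝ :=
  ‖Matrix.toEuclideanCLM (𝕜 := ℂ) A‖

/-- The partial trace over the second tensor factor. -/
def ptrace2 {m e : Type*} [Fintype e] (ρ : Matrix (m × e) (m × e) ℂ) : Matrix m m ℂ :=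
  Matrix.of fun i j => ∑ k, ρ (i, k) (j, k)

/-- The binary logarithm `log₂` of a Hermitian matrix, via the spectral functional
calculus (junk value `0` on non-Hermitian input). -/
def matLog2 {n : Type*} [Fintype n] [DecidableEq n] (A : Matrix n n ℂ) : Matrix n n ℂ :=
  if hA : A.IsHermitian then hA.cfc (Real.logb 2) else 0

/-- The commutator `[A, B] = A·B − B·A`. -/
def mcomm {n : Type*} [Fintype n] (A B : Matrix n n ℂ) : Matrix n n ℂ :=
  A * B - B * A

/-! The deviations `p i - 1/d` sum to zero, so each is at most `χ/2` in absolute value, and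
`p i · d` lies in `[1 - t, 1 + t]` with `t = dχ/2 ≤ 1/2`. Since `(1 + t)(1 - t) ≤ 1`, also
`log₂(1 + t) ≤ -log₂(1 - t)`, and `-log₂(1 - t) ≤ 2t` by concavity of `log` on `[1/2, 1]`. -/

open Finset Real

lemma abs_le_half_sum_abs_of_sum_eq_zero {ι : Type*} [Fintype ι] {q : ι → ℝ}
    (hq : ∑ j, q j = 0) (i : ι) : |q i| ≤ (∑ j, |q j|) / 2 := by
  classical
  have hrest : |q i| ≤ ∑ j ∈ univ.erase i, |q j| := by
    have hqi : q i = -∑ j ∈ univ.erase i, q j := by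
      linarith [add_sum_erase univ q (mem_univ i)]
    rw [hqi, abs_neg]
    exact abs_sum_le_sum_abs _ _
  linarith [add_sum_erase univ (fun j => |q j|) (mem_univ i)]

lemma abs_mul_sub_one_le_of_sum_eq_one {d : ℕ} {p : Fin d → ℝ} (hsum : ∑ i, p i = 1)
    (i : Fin d) : |p i * d - 1| ≤ d * (∑ j, |p j - 1 / (d : ℝ)|) / 2 := by
  have hd : (0 : ℝ) < d := by exact_mod_cast i.pos
  have hcentered : ∑ j, (p j - 1 / (d : ℝ)) = 0 := by
    simp only [sum_sub_distrib, hsum, sum_const, card_univ, Fintype.card_fin, nsmul_eq_mul]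
    field_simp
    ring
  have hscale : p i * d - 1 = d * (p i - 1 / d) := by field_simp
  rw [hscale, abs_mul, abs_of_pos hd, mul_div_assoc]
  exact mul_le_mul_of_nonneg_left (abs_le_half_sum_abs_of_sum_eq_zero hcentered i) hd.le

lemma abs_logb_le_neg_logb_one_sub {b x t : ℝ} (hb : 1 < b) (ht : t < 1) (hx : |x - 1| ≤ t) :
    |logb b x| ≤ -logb b (1 - t) := by
  obtain ⟨hlow, hhigh⟩ := abs_le.mp hx
  have hpos : 0 < 1 - t := by linarith
  have hsym : logb b (1 + t) + logb b (1 - t) ≤ 0 := by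
    rw [← logb_mul (by linarith) hpos.ne']
    exact logb_nonpos hb (by nlinarith) (by nlinarith)
  rw [abs_le]
  constructor
  · linarith [logb_le_logb_of_le hb hpos (by linarith : 1 - t ≤ x)]
  · linarith [logb_le_logb_of_le hb (by linarith) (by linarith : x ≤ 1 + t)]

lemma neg_logb_two_one_sub_le {t : ℝ} (ht₀ : 0 ≤ t) (ht : t ≤ 1 / 2) :
    -logb 2 (1 - t) ≤ 2 * t := by
  -- concavity of `log` between `1` and `1/2`, with `1 - t = (1 - 2t) · 1 + 2t · (1/2)`
  have hconc := strictConcaveOn_log_Ioi.concaveOn.2 (x := 1) (y := 1 / 2)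
    (by norm_num : (1 : ℝ) ∈ Set.Ioi 0) (by norm_num : (1 / 2 : ℝ) ∈ Set.Ioi 0)
    (by linarith : 0 ≤ 1 - 2 * t) (by linarith : 0 ≤ 2 * t) (by ring)
  have hmid : (1 - 2 * t) • (1 : ℝ) + (2 * t) • (1 / 2 : ℝ) = 1 - t := by
    simp only [smul_eq_mul]; ring
  rw [hmid] at hconc
  simp only [smul_eq_mul, log_one, one_div, log_inv, mul_zero, zero_add] at hconc
  rw [logb, ← neg_div, div_le_iff₀ (log_pos one_lt_two)]
  linarith

theorem probVector_close_to_uniform_general {d : ℕ}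
    (p : Fin d → ℝ) (hsum : ∑ i, p i = 1)
    (χ : ℝ) (hχ : χ = ∑ i, |p i - 1 / (d : ℝ)|) (hsmall : χ ≤ 1 / (d : ℝ)) :
    (∀ i, 0 < p i) ∧
      ∀ i, |Real.logb 2 (p i * d)| ≤ -Real.logb 2 (1 - (d : ℝ) * χ / 2) ∧
        -Real.logb 2 (1 - (d : ℝ) * χ / 2) ≤ (d : ℝ) * χ := by
  have hχ₀ : 0 ≤ χ := hχ ▸ sum_nonneg fun i _ => abs_nonneg _
  have hclose (i : Fin d) : |p i * d - 1| ≤ d * χ / 2 :=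
    hχ ▸ abs_mul_sub_one_le_of_sum_eq_one hsum i
  have hdχ (i : Fin d) : d * χ ≤ 1 := by
    rwa [← le_div_iff₀' (by exact_mod_cast i.pos)]
  refine ⟨fun i => ?_, fun i => ⟨?_, ?_⟩⟩
  · have := (abs_le.mp (hclose i)).1
    exact pos_of_mul_pos_left (by linarith [hdχ i]) d.cast_nonneg
  · exact abs_logb_le_neg_logb_one_sub one_lt_two (by linarith [hdχ i]) (hclose i)
  · linarith [neg_logb_two_one_sub_le (by positivity) (by linarith [hdχ i] : d * χ / 2 ≤ 1 / 2)]

/-- If a probability vector `p` on `d ≥ 2` outcomes has ℓ¹-distance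
`χ ≤ 1/d` from the uniform distribution, then every `p i` is strictly positive and
`|log₂(p i · d)| ≤ −log₂(1 − d·χ/2) ≤ d·χ` for every `i`. -/
theorem probVector_close_to_uniform {d : ℕ} (hd : 2 ≤ d)
    (p : Fin d → ℝ) (hp : ∀ i, 0 ≤ p i) (hsum : ∑ i, p i = 1)
    (χ : ℝ) (hχ : χ = ∑ i, |p i - 1 / (d : ℝ)|) (hsmall : χ ≤ 1 / (d : ℝ)) :
    (∀ i, 0 < p i) ∧
      ∀ i, |Real.logb 2 (p i * d)| ≤ -Real.logb 2 (1 - (d : ℝ) * χ / 2) ∧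
        -Real.logb 2 (1 - (d : ℝ) * χ / 2) ≤ (d : ℝ) * χ :=
  probVector_close_to_uniform_general p hsum χ hχ hsmall
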